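/- (Lower diagonal derivative inequality for the covariance evolution.) Let ε > 0, let J ⊆ {1,…,n} with selection matrix H_J, let Ω be a |J|×|J| diagonal matrix with 0 ≤ Ω_{j,j} ≤ ω_max, let φ be an n×n real matrix with nonnegative entries, and let P : [0,∞) → ℝ^{n×n} be a differentiable function taking values in the symmetric positive semidefinite matrices with [P_t]_{k,k} > 0 for all k, t. Let F : [0,∞) → ℝ^{n×n} satisfy [F_t + F_tᵀ]_{k,k} ≥ −2C·√( [P_t]_{k,k} · m(t) ) for a constant C ≥ 0, where m(t) := max_j [P_t]_{j,j}, and suppose P solves d/dt P_t = (F_t + F_tᵀ) + (P_t†P_t + P_tP_t†) − (1/(2ε))·( (P_t∘φ)H_JᵀΩH_JP_t + P_tH_JᵀΩH_J(P_t∘φ) ), with P† the diagonal approximate inverse and ∘ the Hadamard product. Then for every k and t, d/dt [P_t]_{k,k} ≥ −2C·√( [P_t]_{k,k}·m(t) ) − ( C_φ^{(J)}(k)·ω_max/ε )·[P_t]_{k,k}·m(t) + 2, where C_φ^{(J)}(k) := Σ_{j∈J} φ_{k,j}. -/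

import Mathlib

/-!
With `D = H_JᵀΩH_J`, the diagonal entry
`[(P∘φ)DP + PD(P∘φ)]_{k,k} = Σ_j P_{k,j}² D_{j,j} (φ_{k,j} + φ_{j,k})`
involves the transpose of `φ`. But `P_t` is symmetric for all `t`, so is its derivative, and hence
so is this gain term. For `Ψ = P∘φ - (P∘φ)ᵀ` that says `ΨDP + PDΨ = 0`, and a trace argument (after
factoring `D = RᴴR`, `P = SᴴS`) upgrades it to `ΨDP = 0`. Thus the diagonal of the gain term is
`2 Σ_j φ_{k,j} D_{j,j} P_{k,j}²`, which Cauchy–Schwarz `P_{k,j}² ≤ P_{k,k} P_{j,j}` bounds by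
`2 C_φ^{(J)}(k) ω_max P_{k,k} m(t)`; the constant `2` is the diagonal of `P†P + PP†`.
-/

open scoped Matrix

/-- The selection (observation) matrix `H_J` of an index set `J`: the `|J| × n` matrix
whose rows are the standard basis vectors `e_jᵀ` for `j ∈ J`. -/
def selMatrix {n : ℕ} (J : Finset (Fin n)) : Matrix {j // j ∈ J} (Fin n) ℝ :=
  Matrix.of fun j l => if (j : Fin n) = l then (1 : ℝ) else 0

/-- The diagonal approximate inverse `P†`. -/
noncomputable def diagInv {n : ℕ} (M : Matrix (Fin n) (Fin n) ℝ) :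
    Matrix (Fin n) (Fin n) ℝ :=
  Matrix.diagonal fun k => 1 / M k k

/-- The right-hand side of the covariance evolution equation of the localised
Ensemble Kalman–Bucy filter with partial observations:
`(F + Fᵀ) + (P†P + PP†) − (1/(2ε)) ((P∘φ)H_JᵀΩH_JP + PH_JᵀΩH_J(P∘φ))`. -/
noncomputable def covRHS {n : ℕ} (ε : ℝ) (J : Finset (Fin n)) (ω : Fin n → ℝ)
    (φ F P : Matrix (Fin n) (Fin n) ℝ) : Matrix (Fin n) (Fin n) ℝ :=
  (F + Fᵀ) + (diagInv P * P + P * diagInv P) -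
    (1 / (2 * ε)) •
      ((P.hadamard φ) * (selMatrix J)ᵀ * Matrix.diagonal (fun j : {j // j ∈ J} => ω j)
          * selMatrix J * P +
        P * (selMatrix J)ᵀ * Matrix.diagonal (fun j : {j // j ∈ J} => ω j)
          * selMatrix J * (P.hadamard φ))

open scoped ComplexOrder

namespace Matrix

theorem PosSemidef.apply_mul_apply_le {ι 𝕜 : Type*} [RCLike 𝕜] {P : Matrix ι ι 𝕜}
    (hP : P.PosSemidef) (i j : ι) : P i j * P j i ≤ P i i * P j j := by
  have := (hP.submatrix ![i, j]).det_nonneg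
  rw [det_fin_two] at this
  simpa [sub_nonneg] using this

variable {ι κ 𝕜 : Type*} [Fintype ι] [Fintype κ] [RCLike 𝕜]

theorem mul_eq_zero_of_anticommute_mul_conjTranspose_self {A : Matrix ι ι 𝕜}
    {K : Matrix ι κ 𝕜} (hA : Aᴴ = -A) (h : A * (K * Kᴴ) + K * Kᴴ * A = 0) : A * K = 0 := by
  have hAQA : (A * (K * Kᴴ) * A).trace = 0 := by
    have hcomm : (A * (K * Kᴴ) * A).trace = (K * Kᴴ * A * A).trace := by
      rw [Matrix.mul_assoc, trace_mul_comm, Matrix.mul_assoc]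
    have hanti : A * (K * Kᴴ) * A = -(K * Kᴴ * A * A) := by
      rw [eq_neg_of_add_eq_zero_left h, Matrix.neg_mul]
    have := congrArg trace hanti
    rw [trace_neg, ← hcomm] at this
    exact CharZero.eq_neg_self_iff.mp this
  rw [← trace_mul_conjTranspose_self_eq_zero_iff]
  simpa [conjTranspose_mul, hA, Matrix.mul_assoc] using hAQA

open scoped MatrixOrder in
theorem mul_mul_eq_zero_of_anticommute {Ψ D P : Matrix ι ι 𝕜} (hΨ : Ψᴴ = -Ψ)
    (hD : D.PosSemidef) (hP : P.PosSemidef) (h : Ψ * D * P + P * D * Ψ = 0) :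
    Ψ * D * P = 0 := by
  classical
  obtain ⟨R, rfl⟩ := CStarAlgebra.nonneg_iff_eq_star_mul_self.mp hD.nonneg
  obtain ⟨S, rfl⟩ := CStarAlgebra.nonneg_iff_eq_star_mul_self.mp hP.nonneg
  simp only [star_eq_conjTranspose] at h ⊢
  -- Sandwiching by `R` turns the hypothesis into the previous lemma for `T = RΨRᴴ`, `K = RSᴴ`.
  have hT : (R * Ψ * Rᴴ)ᴴ = -(R * Ψ * Rᴴ) := by
    simp [conjTranspose_mul, hΨ, Matrix.mul_assoc]
  have hTK : R * Ψ * Rᴴ * (R * Sᴴ) = 0 := by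
    refine mul_eq_zero_of_anticommute_mul_conjTranspose_self hT ?_
    calc R * Ψ * Rᴴ * (R * Sᴴ * (R * Sᴴ)ᴴ) + R * Sᴴ * (R * Sᴴ)ᴴ * (R * Ψ * Rᴴ)
        = R * (Ψ * (Rᴴ * R) * (Sᴴ * S) + Sᴴ * S * (Rᴴ * R) * Ψ) * Rᴴ := by
          simp only [conjTranspose_mul, conjTranspose_conjTranspose, Matrix.mul_add,
            Matrix.add_mul, Matrix.mul_assoc]
      _ = 0 := by rw [h, Matrix.mul_zero, Matrix.zero_mul]
  have hSDΨ : S * (Rᴴ * R) * Ψ = 0 := by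
    rw [← conjTranspose_mul_self_eq_zero]
    calc (S * (Rᴴ * R) * Ψ)ᴴ * (S * (Rᴴ * R) * Ψ)
        = -(Ψ * (Rᴴ * R) * (Sᴴ * S * (Rᴴ * R) * Ψ)) := by
          simp only [conjTranspose_mul, conjTranspose_conjTranspose, hΨ, Matrix.neg_mul,
            Matrix.mul_assoc]
      _ = Ψ * Rᴴ * (R * Ψ * Rᴴ * (R * Sᴴ)) * S := by
          rw [eq_neg_of_add_eq_zero_right h]
          simp only [Matrix.mul_neg, neg_neg, Matrix.mul_assoc]
      _ = 0 := by rw [hTK, Matrix.mul_zero, Matrix.zero_mul]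
  calc Ψ * (Rᴴ * R) * (Sᴴ * S) = -(Sᴴ * (S * (Rᴴ * R) * Ψ)) := by
        rw [eq_neg_of_add_eq_zero_left h]; simp only [Matrix.mul_assoc]
    _ = 0 := by rw [hSDΨ, Matrix.mul_zero, neg_zero]

theorem mul_mul_add_mul_mul_eq_add_conjTranspose {L D P : Matrix ι ι 𝕜} (hD : D.PosSemidef)
    (hP : P.PosSemidef) (h : (L * D * P + P * D * L)ᴴ = L * D * P + P * D * L) :
    L * D * P + P * D * L = L * D * P + (L * D * P)ᴴ := by
  have hΨ : (L - Lᴴ)ᴴ = -(L - Lᴴ) := by rw [conjTranspose_sub, conjTranspose_conjTranspose, neg_sub]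
  have hanti : (L - Lᴴ) * D * P + P * D * (L - Lᴴ) = 0 := by
    calc (L - Lᴴ) * D * P + P * D * (L - Lᴴ)
        = (L * D * P + P * D * L) - (L * D * P + P * D * L)ᴴ := by
          simp only [conjTranspose_add, conjTranspose_mul, hD.1.eq, hP.1.eq, Matrix.sub_mul,
            Matrix.mul_sub, Matrix.mul_assoc]
          abel
      _ = 0 := by rw [h, sub_self]
  have hL : L * D * P = Lᴴ * D * P := by
    rw [← sub_eq_zero, ← Matrix.sub_mul, ← Matrix.sub_mul]
    exact mul_mul_eq_zero_of_anticommute hΨ hD hP hanti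
  rw [hL, conjTranspose_mul, conjTranspose_mul, conjTranspose_conjTranspose, hD.1.eq, hP.1.eq,
    ← hL, Matrix.mul_assoc P]

theorem hadamard_mul_diagonal_mul_apply_self_le [DecidableEq ι] {P φ : Matrix ι ι ℝ}
    {J : Finset ι} {ω : ι → ℝ} {ωmax m : ℝ} (hP : P.PosSemidef)
    (hφ : ∀ i j, 0 ≤ φ i j) (hω : ∀ j ∈ J, 0 ≤ ω j ∧ ω j ≤ ωmax) (hm : ∀ j, P j j ≤ m)
    (k : ι) :
    (P.hadamard φ * diagonal (fun j => if j ∈ J then ω j else 0) * P) k k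
      ≤ (∑ j ∈ J, φ k j) * ωmax * (P k k * m) := by
  have hentry : ∀ j ∈ J, ω j * (P k j * P j k) ≤ ωmax * (P k k * m) := by
    intro j hj
    have hsq : P k j * P j k = P k j * P k j := by rw [← hP.1.apply j k, star_trivial]
    refine mul_le_mul (hω j hj).2 ((hP.apply_mul_apply_le k j).trans ?_) ?_
      ((hω j hj).1.trans (hω j hj).2)
    · exact mul_le_mul_of_nonneg_left (hm j) hP.diag_nonneg
    · exact hsq ▸ mul_self_nonneg _
  calc (P.hadamard φ * diagonal (fun j => if j ∈ J then ω j else 0) * P) k k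
      = ∑ j ∈ J, φ k j * (ω j * (P k j * P j k)) := by
        rw [mul_apply]
        simp only [mul_diagonal, hadamard_apply, mul_ite, ite_mul, mul_zero, zero_mul,
          Finset.sum_ite_mem, Finset.univ_inter]
        exact Finset.sum_congr rfl fun j _ => by ring
    _ ≤ ∑ j ∈ J, φ k j * (ωmax * (P k k * m)) :=
        Finset.sum_le_sum fun j hj => mul_le_mul_of_nonneg_left (hentry j hj) (hφ k j)
    _ = (∑ j ∈ J, φ k j) * ωmax * (P k k * m) := by simp only [Finset.sum_mul, mul_assoc]

end Matrix

open Matrix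

theorem transpose_eq_of_hasDerivAt_of_transpose_eq {ι : Type*} {P : ℝ → Matrix ι ι ℝ}
    {M : Matrix ι ι ℝ} {a t : ℝ} (hP : ∀ s, a ≤ s → (P s)ᵀ = P s) (ht : a ≤ t)
    (hM : ∀ i l, HasDerivAt (fun s => P s i l) (M i l) t) : Mᵀ = M := by
  -- Uniqueness of derivatives within `Ici a` also covers the endpoint `t = a`.
  ext i l
  refine (uniqueDiffOn_Ici a t ht).eq_deriv _ ((hM l i).hasDerivWithinAt.congr (fun s hs => ?_)
    ?_) (hM i l).hasDerivWithinAt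
  · exact congrFun (congrFun (hP s hs) l) i
  · exact congrFun (congrFun (hP t ht) l) i

theorem selMatrix_transpose_mul_diagonal_mul_selMatrix {n : ℕ} (J : Finset (Fin n))
    (ω : Fin n → ℝ) :
    (selMatrix J)ᵀ * diagonal (fun j : {j // j ∈ J} => ω j) * selMatrix J
      = diagonal fun j => if j ∈ J then ω j else 0 := by
  ext a b
  rw [mul_apply]
  simp only [mul_diagonal, transpose_apply, selMatrix, of_apply, ite_mul, one_mul, zero_mul]
  rw [Finset.sum_coe_sort J (fun j => if j = a then ω j * if j = b then 1 else 0 else 0),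
    Finset.sum_ite_eq' J a]
  by_cases ha : a ∈ J <;> by_cases hab : a = b <;> simp [ha, hab]

theorem covRHS_eq {n : ℕ} (ε : ℝ) (J : Finset (Fin n)) (ω : Fin n → ℝ)
    (φ F P : Matrix (Fin n) (Fin n) ℝ) :
    covRHS ε J ω φ F P = (F + Fᵀ) + (diagInv P * P + P * diagInv P) -
      (1 / (2 * ε)) • (P.hadamard φ * diagonal (fun j => if j ∈ J then ω j else 0) * P +
        P * diagonal (fun j => if j ∈ J then ω j else 0) * P.hadamard φ) := by
  simp only [covRHS, ← selMatrix_transpose_mul_diagonal_mul_selMatrix, Matrix.mul_assoc]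

theorem diagInv_mul_add_mul_diagInv_apply_self {n : ℕ} {P : Matrix (Fin n) (Fin n) ℝ}
    {k : Fin n} (hk : P k k ≠ 0) : (diagInv P * P + P * diagInv P) k k = 2 := by
  simp only [diagInv, Matrix.add_apply, diagonal_mul, mul_diagonal]
  field_simp
  norm_num

theorem transpose_diagInv_mul_add_mul_diagInv {n : ℕ} {P : Matrix (Fin n) (Fin n) ℝ}
    (hP : Pᵀ = P) : (diagInv P * P + P * diagInv P)ᵀ = diagInv P * P + P * diagInv P := by
  rw [transpose_add, transpose_mul, transpose_mul, hP, diagInv, diagonal_transpose, add_comm]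

theorem covRHS_apply_self_of_transpose_eq {n : ℕ} {ε : ℝ} {J : Finset (Fin n)} {ω : Fin n → ℝ}
    {φ F P : Matrix (Fin n) (Fin n) ℝ} (hε : ε ≠ 0) (hω : ∀ j ∈ J, 0 ≤ ω j)
    (hP : P.PosSemidef) {k : Fin n} (hk : P k k ≠ 0)
    (hsymm : (covRHS ε J ω φ F P)ᵀ = covRHS ε J ω φ F P) :
    covRHS ε J ω φ F P k k = (F + Fᵀ) k k + 2 -
      (P.hadamard φ * diagonal (fun j => if j ∈ J then ω j else 0) * P) k k / ε := by
  set D : Matrix (Fin n) (Fin n) ℝ := diagonal fun j => if j ∈ J then ω j else 0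
  set L := P.hadamard φ
  have hPt : Pᵀ = P := (isHermitian_iff_isSymm.mp hP.1).eq
  have hD : D.PosSemidef := PosSemidef.diagonal fun j => by
    dsimp only; split_ifs with hj
    exacts [hω j hj, le_rfl]
  have hgain : (L * D * P + P * D * L)ᴴ = L * D * P + P * D * L := by
    rw [covRHS_eq, transpose_sub, transpose_smul, transpose_add (F + _), transpose_add F,
      transpose_transpose, add_comm Fᵀ, transpose_diagInv_mul_add_mul_diagInv hPt] at hsymm
    rw [conjTranspose_eq_transpose_of_trivial]
    exact smul_right_injective _ (by positivity) (sub_right_injective hsymm)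
  have hdiag : (L * D * P + P * D * L) k k = 2 * (L * D * P) k k := by
    rw [mul_mul_add_mul_mul_eq_add_conjTranspose hD hP hgain, Matrix.add_apply,
      conjTranspose_apply, star_trivial, two_mul]
  rw [covRHS_eq, Matrix.sub_apply, Matrix.add_apply, Matrix.smul_apply, smul_eq_mul,
    diagInv_mul_add_mul_diagInv_apply_self hk, hdiag]
  field_simp

theorem covariance_diag_lower_inequality_general
    {n : ℕ} (hn : 0 < n) (ε ωmax C : ℝ) (hε : 0 < ε)
    (J : Finset (Fin n)) (ω : Fin n → ℝ) (hω : ∀ j ∈ J, 0 ≤ ω j ∧ ω j ≤ ωmax)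
    (φ : Matrix (Fin n) (Fin n) ℝ) (hφ : ∀ i j, 0 ≤ φ i j)
    (P F : ℝ → Matrix (Fin n) (Fin n) ℝ)
    (hpsd : ∀ t, 0 ≤ t → (P t).PosSemidef)
    (hpos : ∀ t, 0 ≤ t → ∀ k, 0 < P t k k)
    (hF : ∀ t, 0 ≤ t → ∀ k,
      -2 * C * Real.sqrt (P t k k *
          (Finset.univ.sup' ⟨⟨0, hn⟩, Finset.mem_univ _⟩ fun j => P t j j))
        ≤ (F t + (F t)ᵀ) k k)
    (hode : ∀ t, 0 ≤ t → ∀ i l,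
      HasDerivAt (fun s => P s i l) (covRHS ε J ω φ (F t) (P t) i l) t) :
    ∀ k, ∀ t, 0 ≤ t →
      -2 * C * Real.sqrt (P t k k *
          (Finset.univ.sup' ⟨⟨0, hn⟩, Finset.mem_univ _⟩ fun j => P t j j))
        - ((∑ j ∈ J, φ k j) * ωmax / ε) * (P t k k *
            (Finset.univ.sup' ⟨⟨0, hn⟩, Finset.mem_univ _⟩ fun j => P t j j))
        + 2
      ≤ deriv (fun s => P s k k) t := by
  intro k t ht
  set m := Finset.univ.sup' ⟨⟨0, hn⟩, Finset.mem_univ _⟩ fun j => P t j j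
  have hm : ∀ j, P t j j ≤ m := fun j => Finset.le_sup' (fun i => P t i i) (Finset.mem_univ j)
  have hsymm : ∀ s, 0 ≤ s → (P s)ᵀ = P s := fun s hs => (isHermitian_iff_isSymm.mp (hpsd s hs).1).eq
  have hbound := hadamard_mul_diagonal_mul_apply_self_le (hpsd t ht) hφ hω hm k
  have hgain_le : ((P t).hadamard φ * diagonal (fun j => if j ∈ J then ω j else 0) * P t) k k / ε
      ≤ (∑ j ∈ J, φ k j) * ωmax / ε * (P t k k * m) := by
    rw [div_mul_eq_mul_div]
    gcongr
  have hrhs := transpose_eq_of_hasDerivAt_of_transpose_eq hsymm ht (hode t ht)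
  rw [(hode t ht k k).deriv, covRHS_apply_self_of_transpose_eq hε.ne' (fun j hj => (hω j hj).1)
    (hpsd t ht) (hpos t ht k).ne' hrhs]
  linarith [hF t ht k]

/-- Lower diagonal derivative inequality for the covariance evolution (partial
observations): with `m(t) := max_j [P_t]_{j,j}`, each diagonal entry satisfies
`d/dt [P_t]_{k,k} ≥ -2C √([P_t]_{k,k} m(t)) - (C_φ^{(J)}(k) ω_max/ε) [P_t]_{k,k} m(t) + 2`,
where `C_φ^{(J)}(k) := Σ_{j∈J} φ_{k,j}`. -/
theorem covariance_diag_lower_inequality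
    {n : ℕ} (hn : 0 < n) (ε ωmax C : ℝ) (hε : 0 < ε) (hC : 0 ≤ C)
    (J : Finset (Fin n)) (ω : Fin n → ℝ) (hω : ∀ j ∈ J, 0 ≤ ω j ∧ ω j ≤ ωmax)
    (φ : Matrix (Fin n) (Fin n) ℝ) (hφ : ∀ i j, 0 ≤ φ i j)
    (P F : ℝ → Matrix (Fin n) (Fin n) ℝ)
    (hpsd : ∀ t, 0 ≤ t → (P t).PosSemidef)
    (hpos : ∀ t, 0 ≤ t → ∀ k, 0 < P t k k)
    (hF : ∀ t, 0 ≤ t → ∀ k,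
      -2 * C * Real.sqrt (P t k k *
          (Finset.univ.sup' ⟨⟨0, hn⟩, Finset.mem_univ _⟩ fun j => P t j j))
        ≤ (F t + (F t)ᵀ) k k)
    (hode : ∀ t, 0 ≤ t → ∀ i l,
      HasDerivAt (fun s => P s i l) (covRHS ε J ω φ (F t) (P t) i l) t) :
    ∀ k, ∀ t, 0 ≤ t →
      -2 * C * Real.sqrt (P t k k *
          (Finset.univ.sup' ⟨⟨0, hn⟩, Finset.mem_univ _⟩ fun j => P t j j))
        - ((∑ j ∈ J, φ k j) * ωmax / ε) * (P t k k *
            (Finset.univ.sup' ⟨⟨0, hn⟩, Finset.mem_univ _⟩ fun j => P t j j))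
        + 2
      ≤ deriv (fun s => P s k k) t :=
  covariance_diag_lower_inequality_general hn ε ωmax C hε J ω hω φ hφ P F hpsd hpos hF hode
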